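/- Input causality is undisturbed: let g : B → C be an affine-stable map with stable family G = { y ∥ z : g(y) ⊒_C z }. Then for any y ∥ z ∈ G and b, b' ∈ y, the event (1,b') is below (1,b) in the induced causal order on y ∥ z if and only if b' ≤_B b. Consequently the first component of the strategy g_! (its projection to B⊥) is partial rigid. -/

import Mathlib

universe u v w

/-- An event structure `(E, ≤, Con)`. -/
structure ES (E : Type u) where
  le : E → E → Prop
  le_refl : ∀ e, le e e
  le_trans : ∀ {a b c}, le a b → le b c → le a c
  le_antisymm : ∀ {a b}, le a b → le b a → a = b
  finitary : ∀ e, Set.Finite {e' | le e' e}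
  Con : Set E → Prop
  con_finite : ∀ {X}, Con X → X.Finite
  con_empty : Con ∅
  con_singleton : ∀ e, Con {e}
  con_mono : ∀ {X Y : Set E}, Y ⊆ X → Con X → Con Y
  con_extend : ∀ {X : Set E} {e e'}, Con X → le e e' → e' ∈ X → Con (insert e X)

namespace ES

variable {E : Type u}

/-- A configuration: consistent and down-closed. -/
def Config (S : ES E) (x : Set E) : Prop :=
  (∀ X : Set E, X ⊆ x → X.Finite → S.Con X) ∧
  ∀ ⦃e e' : E⦄, S.le e' e → e ∈ x → e' ∈ x

/-- The down-closure `[e]` of an event. -/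
def downCl (S : ES E) (e : E) : Set E := {e' | S.le e' e}

/-- The concurrency relation. -/
def Co (S : ES E) (e e' : E) : Prop :=
  S.Con {e, e'} ∧ ¬ S.le e e' ∧ ¬ S.le e' e

end ES

/-- The covering (immediate dependency) relation of an order. -/
def Covers {α : Type u} (le : α → α → Prop) (a b : α) : Prop :=
  a ≠ b ∧ le a b ∧ ∀ c, le a c → le c b → c = a ∨ c = b

/-- An event structure with polarity (`true` = Player `+`, `false` = Opponent `−`). -/
structure Game (E : Type u) extends ES E where
  pol : E → Bool

namespace Game

variable {E : Type u} {E' : Type v}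

def Config (G : Game E) : Set E → Prop := G.toES.Config

/-- The dual game: polarities reversed. -/
def dual (G : Game E) : Game E := { toES := G.toES, pol := fun e => !G.pol e }

/-- The Scott order: `y ⊑ x` iff `y⁻ ⊇ x⁻` and `y⁺ ⊆ x⁺`. -/
def ScottLE (G : Game E) (y x : Set E) : Prop :=
  {e | e ∈ x ∧ G.pol e = false} ⊆ {e | e ∈ y ∧ G.pol e = false} ∧
  {e | e ∈ y ∧ G.pol e = true} ⊆ {e | e ∈ x ∧ G.pol e = true}

/-- `x ⊆⁻ y` : inclusion with only Opponent events intervening. -/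
def subNeg (G : Game E) (x y : Set E) : Prop :=
  x ⊆ y ∧ ∀ e ∈ y, e ∉ x → G.pol e = false

/-- `x ⊆⁺ y` : inclusion with only Player events intervening. -/
def subPos (G : Game E) (x y : Set E) : Prop :=
  x ⊆ y ∧ ∀ e ∈ y, e ∉ x → G.pol e = true

/-- Race-freeness of a game. -/
def RaceFree (G : Game E) : Prop :=
  ∀ x y z, G.Config x → G.Config y → G.Config z →
    G.subNeg x y → G.subPos x z → G.Config (y ∪ z)

end Game

section StableFamilies

variable {E : Type u}

/-- A subset of a family is compatible when some member of the family bounds it. -/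
def FamCompatible (F : Set (Set E)) (Z : Set (Set E)) : Prop :=
  ∃ u ∈ F, ∀ z ∈ Z, z ⊆ u

/-- Stable families: complete, stable, finitary and coincidence-free. -/
def IsStableFamily (F : Set (Set E)) : Prop :=
  F.Nonempty ∧
  (∀ Z ⊆ F, (∀ W ⊆ Z, W.Finite → FamCompatible F W) → ⋃₀ Z ∈ F) ∧
  (∀ Z ⊆ F, Z.Nonempty → FamCompatible F Z → ⋂₀ Z ∈ F) ∧
  (∀ x ∈ F, ∀ e ∈ x, ∃ x₀ ∈ F, x₀.Finite ∧ e ∈ x₀ ∧ x₀ ⊆ x) ∧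
  (∀ x ∈ F, ∀ e ∈ x, ∀ e' ∈ x, e ≠ e' →
    ∃ x₀ ∈ F, x₀ ⊆ x ∧ (e ∈ x₀ ↔ e' ∉ x₀))

/-- The prime configuration `[e]_x` of `e` in `x`. -/
def primeConfig (F : Set (Set E)) (e : E) (x : Set E) : Set E :=
  ⋂₀ {y | y ∈ F ∧ e ∈ y ∧ y ⊆ x}

/-- The primes of a family. -/
def IsPrime (F : Set (Set E)) (p : Set E) : Prop :=
  ∃ e x, x ∈ F ∧ e ∈ x ∧ p = primeConfig F e x

end StableFamilies

section Par

variable {E : Type u} {E' : Type v}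

/-- Configurations of a parallel composition `A ∥ B` (componentwise). -/
def parConfig (A : Game E) (B : Game E') (w : Set (E ⊕ E')) : Prop :=
  A.Config (Sum.inl ⁻¹' w) ∧ B.Config (Sum.inr ⁻¹' w)

/-- Causal dependency of `A ∥ B` (componentwise). -/
def parLE (A : Game E) (B : Game E') : (E ⊕ E') → (E ⊕ E') → Prop :=
  Sum.LiftRel A.le B.le

/-- Polarity of `A⊥ ∥ B`. -/
def parPolL (A : Game E) (B : Game E') : E ⊕ E' → Bool
  | .inl a => !A.pol a
  | .inr b => B.pol b

end Par


section AffineStable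

variable {E : Type u} {E' : Type v} {E'' : Type w}

/-- Affine-stable maps between games. -/
def IsAffineStable (A : Game E) (B : Game E') (f : Set E → Set E') : Prop :=
  (∀ x, A.Config x → B.Config (f x)) ∧
  (∀ x y, A.Config x → A.Config y → A.subNeg x y → B.subNeg (f x) (f y)) ∧
  (∀ x y, A.Config x → A.Config y → A.subPos x y → B.subPos (f x) (f y)) ∧
  (∀ x, A.Config x → ∀ b ∈ f x, B.pol b = true →
    ∃ x₀, A.Config x₀ ∧ x₀.Finite ∧ x₀ ⊆ x ∧ b ∈ f x₀) ∧
  (∀ x, A.Config x → x.Finite → {b | b ∈ f x ∧ B.pol b = false}.Finite) ∧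
  (∀ I : Set (Set E), (∀ x ∈ I, A.Config x) →
    (∃ u, A.Config u ∧ ∀ x ∈ I, x ⊆ u) →
    B.subPos (⋃₀ (f '' I)) (f (⋃₀ I))) ∧
  (∀ I : Set (Set E), I.Nonempty → (∀ x ∈ I, A.Config x) →
    (∃ u, A.Config u ∧ ∀ x ∈ I, x ⊆ u) →
    B.subNeg (f (⋂₀ I)) (⋂₀ (f '' I)))

/-- The stable family `{ x ∥ y : y ⊑_B f(x) }` of an affine-stable map. -/
def affFamily (A : Game E) (B : Game E') (f : Set E → Set E') :
    Set (Set (E ⊕ E')) :=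
  {w | ∃ x y, A.Config x ∧ B.Config y ∧ B.ScottLE y (f x) ∧
    w = Sum.inl '' x ∪ Sum.inr '' y}

end AffineStable

/-- `e' ≤_v e` in the causal order induced on `v` by a family `F`. -/
def belowIn {X : Type u} (F : Set (Set X)) (v : Set X) (e' e : X) : Prop :=
  ∀ w ∈ F, w ⊆ v → e ∈ w → e' ∈ w

/-!
A member `w` of the family lying below `y ∥ z` and containing `(1,b)` has a down-closed
`B`-part, so it contains `(1,b')` whenever `b' ≤ b`. Conversely `[b] ∥ (z ∩ g[b])` is such a
member: `g` is monotone, so the Opponent events of `g[b]` are Opponent events of `g y`, which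
lie in `z`. Hence the induced order on input events is that of `B`.

For `g_!`, stability of `g` makes the family closed under bounded intersections, so every prime
is a member `y ∥ z` of it. If `p ⊆ q` then `max p ∈ q = [max q]_q`, i.e. `max p` lies below
`max q` in the order induced on `q`, and the first part applies.
-/

open Set

namespace ES

variable {E : Type u} {S : ES E}

lemma Config.sInter {Z : Set (Set E)} (hne : Z.Nonempty) (h : ∀ x ∈ Z, S.Config x) :
    S.Config (⋂₀ Z) := by
  obtain ⟨x₀, hx₀⟩ := hne
  refine ⟨fun X hX hXf => (h x₀ hx₀).1 X (hX.trans (sInter_subset_of_mem hx₀)) hXf, ?_⟩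
  intro e e' hle he
  exact mem_sInter.2 fun t ht => (h t ht).2 hle (mem_sInter.1 he t ht)

lemma Config.inter {x y : Set E} (hx : S.Config x) (hy : S.Config y) : S.Config (x ∩ y) := by
  rw [← sInter_pair]
  exact Config.sInter (insert_nonempty _ _) (by rintro t (rfl | rfl) <;> assumption)

lemma downCl_subset {x : Set E} (hx : S.Config x) {b : E} (hb : b ∈ x) : S.downCl b ⊆ x :=
  fun _ he => hx.2 he hb

lemma Config.downCl {x : Set E} (hx : S.Config x) {b : E} (hb : b ∈ x) :
    S.Config (S.downCl b) :=
  ⟨fun X hX hXf => hx.1 X (hX.trans (downCl_subset hx hb)) hXf,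
    fun _ _ hle he => S.le_trans hle he⟩

end ES

namespace Game

variable {E : Type u} {G : Game E}

lemma ScottLE.inter_of_subset {z x x' : Set E} (h : G.ScottLE z x') (hx : x ⊆ x') :
    G.ScottLE (z ∩ x) x :=
  ⟨fun _ ⟨hc, hpol⟩ => ⟨⟨(h.1 ⟨hx hc, hpol⟩).1, hc⟩, hpol⟩,
    fun _ ⟨hc, hpol⟩ => ⟨hc.2, hpol⟩⟩

lemma scottLE_biInter {ι : Type*} {s : Set ι} {z t : ι → Set E} {t₀ : Set E}
    (h : ∀ i ∈ s, G.ScottLE (z i) (t i)) (ht₀ : G.subNeg t₀ (⋂ i ∈ s, t i)) :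
    G.ScottLE (⋂ i ∈ s, z i) t₀ := by
  constructor
  · rintro c ⟨hc, hpol⟩
    refine ⟨mem_iInter₂.2 fun i hi => ?_, hpol⟩
    exact ((h i hi).1 ⟨mem_iInter₂.1 (ht₀.1 hc) i hi, hpol⟩).1
  · rintro c ⟨hc, hpol⟩
    refine ⟨?_, hpol⟩
    have hct : c ∈ ⋂ i ∈ s, t i :=
      mem_iInter₂.2 fun i hi => ((h i hi).2 ⟨mem_iInter₂.1 hc i hi, hpol⟩).1
    by_contra hc₀
    simp [ht₀.2 c hct hc₀] at hpol

end Game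

section AffineStable

variable {E : Type u} {E' : Type v} {A : Game E} {B : Game E'} {f : Set E → Set E'}

lemma IsAffineStable.mono (hf : IsAffineStable A B f) {x y : Set E} (hx : A.Config x)
    (hy : A.Config y) (hxy : x ⊆ y) : f x ⊆ f y := by
  have h := (hf.2.2.2.2.2.2 {x, y} (insert_nonempty _ _)
    (by rintro t (rfl | rfl) <;> assumption) ⟨y, hy, by rintro t (rfl | rfl) <;> simp [hxy]⟩).1
  rw [sInter_pair, inter_eq_self_of_subset_left hxy, image_pair, sInter_pair] at h
  exact fun _ hc => (h hc).2

lemma mem_affFamily_iff {w : Set (E ⊕ E')} :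
    w ∈ affFamily A B f ↔
      A.Config (Sum.inl ⁻¹' w) ∧ B.Config (Sum.inr ⁻¹' w) ∧
        B.ScottLE (Sum.inr ⁻¹' w) (f (Sum.inl ⁻¹' w)) := by
  constructor
  · rintro ⟨x, y, hx, hy, hs, rfl⟩
    simpa [preimage_image_eq _ Sum.inl_injective, preimage_image_eq _ Sum.inr_injective]
      using ⟨hx, hy, hs⟩
  · rintro ⟨hx, hy, hs⟩
    exact ⟨_, _, hx, hy, hs, (image_preimage_inl_union_image_preimage_inr w).symm⟩

lemma sInter_mem_affFamily (hf : IsAffineStable A B f) {Z : Set (Set (E ⊕ E'))}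
    (hZ : Z ⊆ affFamily A B f) (hne : Z.Nonempty) {u : Set E} (hu : A.Config u)
    (hbound : ∀ w ∈ Z, Sum.inl ⁻¹' w ⊆ u) : ⋂₀ Z ∈ affFamily A B f := by
  have hmem (w) (hw : w ∈ Z) := mem_affFamily_iff.1 (hZ hw)
  have hI : ∀ x ∈ (Sum.inl ⁻¹' ·) '' Z, A.Config x := by
    rintro _ ⟨w, hw, rfl⟩
    exact (hmem w hw).1
  have hstable := hf.2.2.2.2.2.2 _ (hne.image _) hI
    ⟨u, hu, by rintro _ ⟨w, hw, rfl⟩; exact hbound w hw⟩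
  rw [← image_comp, sInter_image, sInter_image] at hstable
  rw [mem_affFamily_iff, preimage_sInter, preimage_sInter]
  refine ⟨?_, ?_, Game.scottLE_biInter (fun w hw => (hmem w hw).2.2) hstable⟩
  · rw [← sInter_image]
    exact ES.Config.sInter (hne.image _) hI
  · rw [← sInter_image]
    exact ES.Config.sInter (hne.image _) (by rintro _ ⟨w, hw, rfl⟩; exact (hmem w hw).2.1)

lemma IsAffineStable.primeConfig_mem_affFamily (hf : IsAffineStable A B f)
    {x : Set (E ⊕ E')} {e : E ⊕ E'} (hx : x ∈ affFamily A B f) (he : e ∈ x) :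
    primeConfig (affFamily A B f) e x ∈ affFamily A B f :=
  sInter_mem_affFamily hf (fun _ hw => hw.1) ⟨x, hx, he, subset_rfl⟩
    (mem_affFamily_iff.1 hx).1 (fun _ hw => preimage_mono hw.2.2)

lemma IsPrime.mem_affFamily (hf : IsAffineStable A B f) {p : Set (E ⊕ E')}
    (hp : IsPrime (affFamily A B f) p) : p ∈ affFamily A B f := by
  obtain ⟨e, x, hx, he, rfl⟩ := hp
  exact hf.primeConfig_mem_affFamily hx he

end AffineStable

lemma mem_primeConfig_iff_belowIn {X : Type u} {F : Set (Set X)} {v : Set X} {e e' : X} :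
    e' ∈ primeConfig F e v ↔ belowIn F v e' e :=
  ⟨fun h w hw hwv he => mem_sInter.1 h w ⟨hw, he, hwv⟩,
    fun h => mem_sInter.2 fun w ⟨hw, he, hwv⟩ => h w hw hwv he⟩

section InputCausality

variable {E' : Type v} {E'' : Type w} {B : Game E'} {C : Game E''} {g : Set E' → Set E''}

lemma belowIn_affFamily_inl_of_le {v : Set (E' ⊕ E'')} {b b' : E'} (h : B.le b' b) :
    belowIn (affFamily B C g) v (Sum.inl b') (Sum.inl b) :=
  fun _ hw _ hb => (mem_affFamily_iff.1 hw).1.2 h hb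

lemma le_of_belowIn_affFamily_inl (hg : IsAffineStable B C g) {y : Set E'} {z : Set E''}
    (hy : B.Config y) (hz : C.Config z) (hs : C.ScottLE z (g y)) {b b' : E'} (hb : b ∈ y)
    (h : belowIn (affFamily B C g) (Sum.inl '' y ∪ Sum.inr '' z) (Sum.inl b') (Sum.inl b)) :
    B.le b' b := by
  have hby : B.downCl b ⊆ y := ES.downCl_subset hy hb
  have hb₀ : B.Config (B.downCl b) := ES.Config.downCl hy hb
  have hmono : g (B.downCl b) ⊆ g y := hg.mono hb₀ hy hby
  have hw : Sum.inl '' B.downCl b ∪ Sum.inr '' (z ∩ g (B.downCl b)) ∈ affFamily B C g :=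
    ⟨_, _, hb₀, ES.Config.inter hz (hg.1 _ hb₀), hs.inter_of_subset hmono, rfl⟩
  have hwv : Sum.inl '' B.downCl b ∪ Sum.inr '' (z ∩ g (B.downCl b)) ⊆
      Sum.inl '' y ∪ Sum.inr '' z :=
    union_subset_union (image_mono hby) (image_mono inter_subset_left)
  simpa [ES.downCl] using h _ hw hwv (Or.inl ⟨b, B.le_refl b, rfl⟩)

lemma belowIn_affFamily_inl_iff (hg : IsAffineStable B C g) {y : Set E'} {z : Set E''}
    (hy : B.Config y) (hz : C.Config z) (hs : C.ScottLE z (g y)) {b b' : E'} (hb : b ∈ y) :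
    belowIn (affFamily B C g) (Sum.inl '' y ∪ Sum.inr '' z) (Sum.inl b') (Sum.inl b) ↔
      B.le b' b :=
  ⟨le_of_belowIn_affFamily_inl hg hy hz hs hb, belowIn_affFamily_inl_of_le⟩

end InputCausality

/-- Input causality is undisturbed: on a configuration `y ∥ z` of the stable
family of an affine-stable `g : B → C`, the induced causal order between input
events is exactly that of `B`; consequently the first component of `g_!` is
partial rigid. -/
theorem stmt15 {E' : Type v} {E'' : Type w} (B : Game E') (C : Game E'')
    (g : Set E' → Set E'') (hg : IsAffineStable B C g)
    (m : {p : Set (E' ⊕ E'') // IsPrime (affFamily B C g) p} → E' ⊕ E'')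
    (hm : ∀ p, m p ∈ p.1 ∧ p.1 = primeConfig (affFamily B C g) (m p) p.1) :
    (∀ y z, B.Config y → C.Config z → C.ScottLE z (g y) →
      ∀ b ∈ y, ∀ b' ∈ y,
        (belowIn (affFamily B C g) (Sum.inl '' y ∪ Sum.inr '' z)
          (Sum.inl b') (Sum.inl b) ↔ B.le b' b)) ∧
    (∀ p q : {p : Set (E' ⊕ E'') // IsPrime (affFamily B C g) p},
      p.1 ⊆ q.1 → ∀ b b', m p = Sum.inl b' → m q = Sum.inl b → B.le b' b) := by
  refine ⟨fun y z hy hz hs b hb b' _ => belowIn_affFamily_inl_iff hg hy hz hs hb, ?_⟩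
  intro p q hpq b b' hp hq
  obtain ⟨hy, hz, hs⟩ := mem_affFamily_iff.1 (q.2.mem_affFamily hg)
  have hb : b ∈ Sum.inl ⁻¹' q.1 := by
    rw [mem_preimage, ← hq]
    exact (hm q).1
  have hbelow : belowIn (affFamily B C g) q.1 (m p) (m q) := by
    rw [← mem_primeConfig_iff_belowIn, ← (hm q).2]
    exact hpq (hm p).1
  rw [hp, hq, ← image_preimage_inl_union_image_preimage_inr q.1] at hbelow
  exact le_of_belowIn_affFamily_inl hg hy hz hs hb hbelow
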